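/- Let X be the two-point random variable with P(X = -a) = p and P(X = b) = 1-p, where a, b > 0 and 0 < p < 1. Let φ = p/(1-p). If b ≥ a and (b/a)·exp(-a-b) ≥ φ, then f(n) = (1-p)·b^n e^{-b}/n! + p·(-a)^n e^{a}/n! is a valid probability mass function on ℕ₀ (nonnegative for every n and summing to 1). -/

import Mathlib

open Real

lemma exp_tsum_aux (x : ℝ) : ∑' n : ℕ, x ^ n / n.factorial = Real.exp x := by
  rw [Real.exp_eq_exp_ℝ, NormedSpace.exp_eq_tsum_div]

/-- Mixed Poisson–two point distribution: with negative atom `-a` of probability `p`,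
positive atom `b` of probability `1 - p`, odds `φ = p/(1-p)`, if `b ≥ a` and
`(b/a)·exp(-a-b) ≥ φ`, then
`f(n) = (1-p)·bⁿe^{-b}/n! + p·(-a)ⁿeᵃ/n!` is a valid probability mass function. -/
theorem mixed_poisson_two_point (a b p : ℝ) (ha : 0 < a) (hb : 0 < b)
    (hp0 : 0 < p) (hp1 : p < 1) (hba : a ≤ b)
    (hodds : p / (1 - p) ≤ (b / a) * Real.exp (-a - b)) :
    (∀ n : ℕ, 0 ≤ (1 - p) * (b ^ n * Real.exp (-b)) / n.factorial
        + p * ((-a) ^ n * Real.exp a) / n.factorial) ∧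
      ∑' n : ℕ, ((1 - p) * (b ^ n * Real.exp (-b)) / n.factorial
        + p * ((-a) ^ n * Real.exp a) / n.factorial) = 1 := by
  have hp1' : 0 < 1 - p := by linarith
  constructor
  · intro n
    have hfac : (0 : ℝ) < n.factorial := by positivity
    rcases Nat.even_or_odd n with he | ho
    · rw [he.neg_pow]
      positivity
    · rw [ho.neg_pow]
      have hn1 : 1 ≤ n := ho.pos
      -- key inequality
      have h1 : p * a ≤ (1 - p) * b * Real.exp (-a - b) := by
        have := (div_le_iff₀ hp1').mp hodds
        have ha' := ha.le
        calc p * a ≤ ((b / a) * Real.exp (-a - b) * (1 - p)) * a := by nlinarith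
          _ = (1 - p) * b * Real.exp (-a - b) := by field_simp
      have hcd : a ^ (n - 1) ≤ b ^ (n - 1) := pow_le_pow_left₀ ha.le hba _
      have hc : (0 : ℝ) < a ^ (n - 1) := by positivity
      have hA : (0 : ℝ) < Real.exp a := Real.exp_pos a
      have hE : Real.exp (-a - b) * Real.exp a = Real.exp (-b) := by
        rw [← Real.exp_add]; ring_nf
      have key : p * (a ^ n * Real.exp a) ≤ (1 - p) * (b ^ n * Real.exp (-b)) := by
        have hpow : a ^ n = a * a ^ (n - 1) := by
          conv_lhs => rw [← Nat.sub_add_cancel hn1]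
          rw [pow_succ]; ring
        have hpowb : b ^ n = b * b ^ (n - 1) := by
          conv_lhs => rw [← Nat.sub_add_cancel hn1]
          rw [pow_succ]; ring
        rw [hpow, hpowb, ← hE]
        nlinarith [mul_le_mul_of_nonneg_right h1 (mul_pos hc hA).le,
          mul_le_mul_of_nonneg_right hcd
            (by positivity : (0:ℝ) ≤ (1 - p) * b * Real.exp (-a - b) * Real.exp a)]
      have : 0 ≤ ((1 - p) * (b ^ n * Real.exp (-b)) + p * (-(a ^ n) * Real.exp a)) /
          n.factorial := by
        apply div_nonneg _ hfac.le
        nlinarith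
      calc (0:ℝ) ≤ ((1 - p) * (b ^ n * Real.exp (-b)) + p * (-(a ^ n) * Real.exp a)) /
          n.factorial := this
        _ = _ := by ring
  · have s1 : Summable (fun n : ℕ => b ^ n / n.factorial) :=
      Real.summable_pow_div_factorial b
    have s2 : Summable (fun n : ℕ => (-a) ^ n / n.factorial) :=
      Real.summable_pow_div_factorial (-a)
    have heq : (fun n : ℕ => (1 - p) * (b ^ n * Real.exp (-b)) / n.factorial
        + p * ((-a) ^ n * Real.exp a) / n.factorial)
        = fun n : ℕ => ((1 - p) * Real.exp (-b)) * (b ^ n / n.factorial)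
          + (p * Real.exp a) * ((-a) ^ n / n.factorial) := by
      funext n; ring
    rw [heq, Summable.tsum_add (s1.mul_left _) (s2.mul_left _), tsum_mul_left, tsum_mul_left,
      exp_tsum_aux, exp_tsum_aux, mul_assoc, mul_assoc, ← Real.exp_add, ← Real.exp_add]
    simp
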